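/- Let A be a non-unital associative algebra with non-degenerate product and let φ : A → M(A) be a non-degenerate algebra homomorphism into the multiplier algebra (i.e. φ(A)·A = A and A·φ(A) = A as linear spans). Then φ extends uniquely to a unital algebra homomorphism M(A) → M(A). -/

import Mathlib

/-- A multiplier of a non-unital ring: a pair of a left multiplier `L` and a right
multiplier `R` satisfying the compatibility conditions. -/
structure Mult (A : Type*) [NonUnitalRing A] where
  L : A → A
  R : A → A
  mid : ∀ a b : A, a * L b = R a * b
  lmul : ∀ a b : A, L (a * b) = L a * b
  rmul : ∀ a b : A, R (a * b) = a * R b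

namespace Mult

variable {A : Type*} [NonUnitalRing A]

theorem ext' {m n : Mult A} (h1 : m.L = n.L) (h2 : m.R = n.R) : m = n := by
  cases m; cases n; simp_all

instance : Zero (Mult A) :=
  ⟨⟨fun _ => 0, fun _ => 0, fun a b => by simp, fun a b => by simp, fun a b => by simp⟩⟩

instance : Add (Mult A) :=
  ⟨fun m n =>
    ⟨fun a => m.L a + n.L a, fun a => m.R a + n.R a,
      fun a b => by simp [mul_add, add_mul, m.mid, n.mid],
      fun a b => by simp [m.lmul, n.lmul, add_mul],
      fun a b => by simp [m.rmul, n.rmul, mul_add]⟩⟩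

instance : AddZeroClass (Mult A) where
  zero_add m := ext' (funext fun a => zero_add _) (funext fun a => zero_add _)
  add_zero m := ext' (funext fun a => add_zero _) (funext fun a => add_zero _)

instance : One (Mult A) := ⟨⟨id, id, fun _ _ => rfl, fun _ _ => rfl, fun _ _ => rfl⟩⟩

instance : Mul (Mult A) :=
  ⟨fun m n =>
    ⟨fun a => m.L (n.L a), fun a => n.R (m.R a),
      fun a b => by show a * m.L (n.L b) = n.R (m.R a) * b; rw [m.mid, n.mid],
      fun a b => by show m.L (n.L (a * b)) = m.L (n.L a) * b; rw [n.lmul, m.lmul],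
      fun a b => by show n.R (m.R (a * b)) = a * n.R (m.R b); rw [m.rmul, n.rmul]⟩⟩

/-- The canonical embedding `A → M(A)`. -/
def incl (a : A) : Mult A :=
  ⟨fun b => a * b, fun b => b * a,
    fun b c => by show b * (a * c) = b * a * c; rw [mul_assoc],
    fun b c => by show a * (b * c) = a * b * c; rw [mul_assoc],
    fun b c => by show b * c * a = b * (c * a); rw [mul_assoc]⟩

end Mult

/-!
Write `m a` for `m.L a` and `a m` for `m.R a`. The extension `ψ` is forced by
`ψ m * φ a = φ (m a)`: since the elements `φ a b` span `A`, this prescribes `ψ m` on a spanning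
set. The prescription is well defined because the elements `d φ c` span `A` as well, so by
non-degeneracy an element is determined by its left products with them, and
`φ c * φ (m a) = φ (c m) * φ a` gives `d φ c · Σ φ (m aᵢ) bᵢ = d φ (c m) · Σ φ aᵢ bᵢ`, which only
depends on `Σ φ aᵢ bᵢ`; the right multiplier is built symmetrically. All properties of `ψ`, and
its uniqueness, then follow from the uniqueness of the solution `n` of `n * φ a = φ (m a)`.
-/

section NonUnitalRing

variable {A : Type*} [NonUnitalRing A]

theorem eq_of_forall_mem_mul_eq (hr : ∀ x : A, (∀ a : A, a * x = 0) → x = 0) {s : Set A}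
    (hs : AddSubgroup.closure s = ⊤) {x y : A} (h : ∀ a ∈ s, a * x = a * y) : x = y := by
  have : AddMonoidHom.mulRight (x - y) = 0 :=
    AddMonoidHom.eq_of_eqOn_dense hs fun a ha => by simp [mul_sub, h a ha]
  exact sub_eq_zero.mp (hr _ fun a => DFunLike.congr_fun this a)

theorem eq_of_forall_mul_mem_eq (hl : ∀ x : A, (∀ a : A, x * a = 0) → x = 0) {s : Set A}
    (hs : AddSubgroup.closure s = ⊤) {x y : A} (h : ∀ a ∈ s, x * a = y * a) : x = y := by
  have : AddMonoidHom.mulLeft (x - y) = 0 :=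
    AddMonoidHom.eq_of_eqOn_dense hs fun a ha => by simp [sub_mul, h a ha]
  exact sub_eq_zero.mp (hl _ fun a => DFunLike.congr_fun this a)

end NonUnitalRing

theorem exists_forall_apply_eq_of_closure_eq_top {ι G H K : Type*} [AddGroup G] [AddGroup H]
    [AddGroup K] {s : Set G} (hs : AddSubgroup.closure s = ⊤) (f : ι → H →+ K) (g : ι → G →+ K)
    (h : ∀ x ∈ s, ∃ y, ∀ i, f i y = g i x) (x : G) : ∃ y, ∀ i, f i y = g i x := by
  have hx : x ∈ AddSubgroup.closure s := hs ▸ AddSubgroup.mem_top x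
  induction hx using AddSubgroup.closure_induction with
  | mem x hx => exact h x hx
  | zero => exact ⟨0, by simp⟩
  | add x x' _ _ hx hx' =>
    obtain ⟨y, hy⟩ := hx
    obtain ⟨y', hy'⟩ := hx'
    exact ⟨y + y', fun i => by rw [map_add, map_add, hy, hy']⟩
  | neg x _ hx =>
    obtain ⟨y, hy⟩ := hx
    exact ⟨-y, fun i => by rw [map_neg, map_neg, hy]⟩

namespace Mult

variable {A : Type*} [NonUnitalRing A]

theorem L_add (hr : ∀ x : A, (∀ a : A, a * x = 0) → x = 0) (m : Mult A) (x y : A) :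
    m.L (x + y) = m.L x + m.L y :=
  sub_eq_zero.mp <| hr _ fun a => by
    rw [mul_sub, mul_add, m.mid, m.mid, m.mid, ← mul_add, sub_self]

theorem R_add (hl : ∀ x : A, (∀ a : A, x * a = 0) → x = 0) (m : Mult A) (x y : A) :
    m.R (x + y) = m.R x + m.R y :=
  sub_eq_zero.mp <| hl _ fun a => by
    rw [sub_mul, add_mul, ← m.mid, ← m.mid, ← m.mid, add_mul, sub_self]

theorem R_zero (hl : ∀ x : A, (∀ a : A, x * a = 0) → x = 0) (m : Mult A) : m.R 0 = 0 :=
  hl _ fun a => by rw [← m.mid, zero_mul]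

theorem ext_of_L_eq (hl : ∀ x : A, (∀ a : A, x * a = 0) → x = 0) {m n : Mult A}
    (h : m.L = n.L) : m = n :=
  ext' h <| funext fun x => sub_eq_zero.mp <| hl _ fun a => by
    rw [sub_mul, ← m.mid, ← n.mid, h, sub_self]

protected theorem mul_assoc (p q r : Mult A) : p * q * r = p * (q * r) := rfl

protected theorem zero_mul (hl : ∀ x : A, (∀ a : A, x * a = 0) → x = 0) (p : Mult A) :
    0 * p = 0 :=
  ext' rfl <| funext fun _ => p.R_zero hl

protected theorem add_mul (hl : ∀ x : A, (∀ a : A, x * a = 0) → x = 0) (m n p : Mult A) :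
    (m + n) * p = m * p + n * p :=
  ext' rfl <| funext fun _ => p.R_add hl _ _

theorem mul_incl (m : Mult A) (a : A) : m * incl a = incl (m.L a) :=
  ext' (funext fun b => m.lmul a b) (funext fun b => (m.mid b a).symm)

theorem R_mul_L (p q : Mult A) (x y : A) : p.R x * q.L y = (p * q).R x * y := q.mid _ _

theorem eq_of_forall_mul_eq {ι : Type*} {φ : ι → Mult A}
    (hl : ∀ x : A, (∀ a : A, x * a = 0) → x = 0) (hr : ∀ x : A, (∀ a : A, a * x = 0) → x = 0)
    (hφ : AddSubgroup.closure {x : A | ∃ i a, x = (φ i).L a} = ⊤) {n n' : Mult A}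
    (h : ∀ i, n * φ i = n' * φ i) : n = n' := by
  refine ext_of_L_eq hl ?_
  have : AddMonoidHom.mk' n.L (n.L_add hr) = AddMonoidHom.mk' n'.L (n'.L_add hr) := by
    refine AddMonoidHom.eq_of_eqOn_dense hφ ?_
    rintro _ ⟨i, a, rfl⟩
    exact congr_fun (congr_arg L (h i)) a
  exact funext (DFunLike.congr_fun this)

end Mult

section Extension

variable {A : Type*} [NonUnitalRing A] {φ : A → Mult A}

theorem R_mul_L_map_L (hφ : ∀ a b, φ (a * b) = φ a * φ b) (m : Mult A) (a b c d : A) :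
    (φ c).R d * (φ (m.L a)).L b = (φ (m.R c)).R d * (φ a).L b := by
  rw [Mult.R_mul_L, Mult.R_mul_L, ← hφ, ← hφ, m.mid]

theorem exists_mul_map_eq_map_L (hl : ∀ x : A, (∀ a : A, x * a = 0) → x = 0)
    (hr : ∀ x : A, (∀ a : A, a * x = 0) → x = 0) (hφ : ∀ a b, φ (a * b) = φ a * φ b)
    (hφL : AddSubgroup.closure {x : A | ∃ m a, x = (φ m).L a} = ⊤)
    (hφR : AddSubgroup.closure {x : A | ∃ m a, x = (φ m).R a} = ⊤) (m : Mult A) :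
    ∃ n : Mult A, ∀ a, n * φ a = φ (m.L a) := by
  choose L hL using exists_forall_apply_eq_of_closure_eq_top hφL
    (fun i : A × A => AddMonoidHom.mulLeft ((φ i.1).R i.2))
    (fun i => AddMonoidHom.mulLeft ((φ (m.R i.1)).R i.2))
    (by rintro _ ⟨a, b, rfl⟩; exact ⟨_, fun i => R_mul_L_map_L hφ m a b i.1 i.2⟩)
  choose R hR using exists_forall_apply_eq_of_closure_eq_top hφR
    (fun i : A × A => AddMonoidHom.mulRight ((φ i.1).L i.2))
    (fun i => AddMonoidHom.mulRight ((φ (m.L i.1)).L i.2))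
    (by rintro _ ⟨a, b, rfl⟩; exact ⟨_, fun i => (R_mul_L_map_L hφ m i.1 i.2 a b).symm⟩)
  simp only [AddMonoidHom.coe_mulLeft, AddMonoidHom.coe_mulRight, Prod.forall] at hL hR
  have L_map : ∀ a b, L ((φ a).L b) = (φ (m.L a)).L b := fun a b =>
    eq_of_forall_mem_mul_eq hr hφR (by rintro _ ⟨c, d, rfl⟩; rw [hL, R_mul_L_map_L hφ])
  have R_map : ∀ a b, R ((φ a).R b) = (φ (m.R a)).R b := fun a b =>
    eq_of_forall_mul_mem_eq hl hφL (by rintro _ ⟨c, d, rfl⟩; rw [hR, R_mul_L_map_L hφ])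
  have R_add : ∀ x y, R (x + y) = R x + R y := fun x y =>
    eq_of_forall_mul_mem_eq hl hφL (by rintro _ ⟨c, d, rfl⟩; rw [add_mul, hR, hR, hR, add_mul])
  have mid : ∀ a b, a * L b = R a * b := by
    intro a b
    have : AddMonoidHom.mulRight (L b) =
        (AddMonoidHom.mulRight b).comp (AddMonoidHom.mk' R R_add) := by
      refine AddMonoidHom.eq_of_eqOn_dense hφR ?_
      rintro _ ⟨c, d, rfl⟩
      show (φ c).R d * L b = R ((φ c).R d) * b
      rw [hL, R_map]
    exact DFunLike.congr_fun this a
  refine ⟨⟨L, R, mid, fun a b => ?_, fun a b => ?_⟩,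
    fun a => Mult.ext_of_L_eq hl (funext (L_map a))⟩
  · exact eq_of_forall_mem_mul_eq hr hφR (by
      rintro _ ⟨c, d, rfl⟩; rw [hL, ← mul_assoc, ← mul_assoc, hL])
  · exact eq_of_forall_mul_mem_eq hl hφL (by
      rintro _ ⟨c, d, rfl⟩; rw [hR, mul_assoc, mul_assoc, hR])

end Extension

/-- A non-degenerate homomorphism `φ : A → M(A)` of a non-degenerate non-unital algebra
extends uniquely to a unital homomorphism `M(A) → M(A)`. -/
theorem stmt18 {A : Type*} [NonUnitalRing A]
    (hnd : (∀ x : A, (∀ a : A, x * a = 0) → x = 0) ∧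
           (∀ x : A, (∀ a : A, a * x = 0) → x = 0))
    (φ : A →+ Mult A)
    (hφmul : ∀ a b : A, φ (a * b) = φ a * φ b)
    (hnd1 : AddSubgroup.closure {x : A | ∃ m a : A, x = (φ m).L a} = ⊤)
    (hnd2 : AddSubgroup.closure {x : A | ∃ m a : A, x = (φ m).R a} = ⊤) :
    ∃! ψ : Mult A →+ Mult A,
      (∀ m n : Mult A, ψ (m * n) = ψ m * ψ n) ∧ ψ 1 = 1 ∧
      ∀ a : A, ψ (Mult.incl a) = φ a := by
  obtain ⟨hl, hr⟩ := hnd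
  choose ψ hψ using exists_mul_map_eq_map_L hl hr hφmul hnd1 hnd2
  have eq_ψ : ∀ m n, (∀ a, n * φ a = φ (m.L a)) → n = ψ m := fun m n h =>
    Mult.eq_of_forall_mul_eq hl hr hnd1 fun a => (h a).trans (hψ m a).symm
  have ψ_zero : ψ 0 = 0 :=
    (eq_ψ 0 0 fun a => by rw [Mult.zero_mul hl]; exact (map_zero φ).symm).symm
  have ψ_add : ∀ m n, ψ (m + n) = ψ m + ψ n := fun m n =>
    (eq_ψ _ _ fun a => by rw [Mult.add_mul hl, hψ, hψ, ← map_add]; rfl).symm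
  have ψ_mul : ∀ m n, ψ (m * n) = ψ m * ψ n := fun m n =>
    (eq_ψ _ _ fun a => by rw [Mult.mul_assoc, hψ, hψ]; rfl).symm
  have ψ_one : ψ 1 = 1 := (eq_ψ 1 1 fun a => rfl).symm
  have ψ_incl : ∀ a, ψ (Mult.incl a) = φ a := fun a =>
    (eq_ψ _ _ fun b => (hφmul a b).symm).symm
  refine ⟨⟨⟨ψ, ψ_zero⟩, ψ_add⟩, ⟨ψ_mul, ψ_one, ψ_incl⟩, ?_⟩
  rintro ψ' ⟨hmul, -, hincl⟩
  exact AddMonoidHom.ext fun m =>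
    eq_ψ m (ψ' m) fun a => by rw [← hincl, ← hmul, Mult.mul_incl, hincl]
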